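/- arXiv:1201.1256 — 2 statements merged into one kernel-verified Lean document; each statement's English description precedes it below -/
import Mathlib

section
/- The phase point operators are trace-orthogonal: for all u, v ∈ ZMod d × ZMod d, trace(A_u * A_v) = d if u = v and = 0 otherwise. -/
open Matrix Complex

/-- ω = exp(2πi/d). -/
noncomputable def omegaC (d : ℕ) : ℂ := Complex.exp (2 * Real.pi * Complex.I / d)

/-- The clock matrix `Z`, with `Z x x = ω ^ x.val`. -/
noncomputable def Zmat (d : ℕ) : Matrix (ZMod d) (ZMod d) ℂ :=
  Matrix.diagonal (fun x => omegaC d ^ x.val)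

/-- The shift matrix `X`, with `X x y = 1` iff `x = y + 1`. -/
noncomputable def Xmat (d : ℕ) : Matrix (ZMod d) (ZMod d) ℂ :=
  Matrix.of fun x y => if x = y + 1 then 1 else 0

/-- The Heisenberg–Weyl operator `T_a`. -/
noncomputable def TW (d : ℕ) [NeZero d] (a : ZMod d × ZMod d) : Matrix (ZMod d) (ZMod d) ℂ :=
  omegaC d ^ ((-((2 : ZMod d)⁻¹ * a.1 * a.2)).val) • (Zmat d ^ a.1.val * Xmat d ^ a.2.val)

/-- The phase point operator at the origin, `A_0 = (1/d) • ∑ a, T_a`. -/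
noncomputable def Apoint0 (d : ℕ) [NeZero d] : Matrix (ZMod d) (ZMod d) ℂ :=
  (1 / (d : ℂ)) • ∑ a : ZMod d × ZMod d, TW d a

/-- The phase point operator `A_u = T_u * A_0 * T_uᴴ`. -/
noncomputable def Apoint (d : ℕ) [NeZero d] (u : ZMod d × ZMod d) : Matrix (ZMod d) (ZMod d) ℂ :=
  TW d u * Apoint0 d * (TW d u)ᴴ

open ZMod

/-!
All operators involved are monomial matrices, so the proof is a computation of entries. With
`ψ = ZMod.stdAddChar` one has `T_a x y = [y = x - a₂] ψ(a₁ x - a₁ a₂ / 2)`. Summing over `a`,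
orthogonality of characters gives `A_0 x y = [x + y = 0]`, and conjugating,
`A_u x y = [x + y = 2 u₂] ψ(u₁ (x - y))`. Hence the diagonal entries of `A_u A_v` vanish unless
`2 u₂ = 2 v₂`, and otherwise equal `ψ((x - u₂) · 2 (u₁ - v₁))`, whose sum over `x` is
`d [2 (u₁ - v₁) = 0]`. Both steps cancel a factor `2`, which is invertible as `d` is odd.
-/

lemma AddChar.sum_sub_mulShift {R R' : Type*} [CommRing R] [Fintype R] [DecidableEq R]
    [CommRing R'] [IsDomain R'] {ψ : AddChar R R'} (a b : R) (hψ : ψ.IsPrimitive) :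
    ∑ x, ψ ((x - a) * b) = if b = 0 then (Fintype.card R : R') else 0 :=
  (Fintype.sum_equiv (Equiv.subRight a) _ _ fun _ => rfl).trans <| by
    rw [AddChar.sum_mulShift b hψ, Nat.cast_ite, Nat.cast_zero]

section
variable {d : ℕ} [NeZero d]

lemma omegaC_pow (n : ℕ) : omegaC d ^ n = stdAddChar (n : ZMod d) := by
  have h := stdAddChar_coe (N := d) n
  push_cast at h
  rw [h, omegaC, ← Complex.exp_nat_mul]
  ring_nf

lemma omegaC_pow_val (k : ZMod d) : omegaC d ^ k.val = stdAddChar k := by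
  rw [omegaC_pow, natCast_zmod_val]

lemma star_stdAddChar (k : ZMod d) : star (stdAddChar k) = stdAddChar (-k) := by
  rw [AddChar.map_neg_eq_inv, ← AddChar.inv_apply']
  exact AddChar.starComp_apply (by simp [ZMod.ringChar_zmod_n, Nat.pos_of_neZero]) k

lemma Zmat_pow_val (k : ZMod d) : Zmat d ^ k.val = diagonal fun x => stdAddChar (k * x) := by
  rw [Zmat, diagonal_pow]
  congr 1
  funext x
  rw [Pi.pow_apply, omegaC_pow_val, ← AddChar.map_nsmul_eq_pow, nsmul_eq_mul, natCast_zmod_val]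

lemma Xmat_pow_apply (n : ℕ) (x y : ZMod d) :
    (Xmat d ^ n) x y = if y = x - n then 1 else 0 := by
  induction n generalizing y with
  | zero => simp [one_apply, eq_comm]
  | succ n ih =>
    rw [pow_succ, mul_apply]
    simp only [ih]
    simp only [Xmat, of_apply, ite_mul, one_mul, zero_mul, Finset.sum_ite_eq', Finset.mem_univ,
      if_true]
    congr 1
    grind

lemma TW_apply (a : ZMod d × ZMod d) (x y : ZMod d) :
    TW d a x y = if y = x - a.2 then stdAddChar (a.1 * x - 2⁻¹ * a.1 * a.2) else 0 := by
  rw [TW, Matrix.smul_apply, Zmat_pow_val, diagonal_mul, Xmat_pow_apply, natCast_zmod_val,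
    omegaC_pow_val, smul_eq_mul]
  split_ifs
  · rw [mul_one, ← AddChar.map_add_eq_mul]
    exact congrArg _ (by ring)
  · simp only [mul_zero]

variable (h2 : IsUnit (2 : ZMod d))
include h2

lemma Apoint0_apply (x y : ZMod d) : Apoint0 d x y = if y = -x then 1 else 0 := by
  have hsub (a₂ : ZMod d) : y = x - a₂ ↔ a₂ = x - y := by grind
  have hchar (a₁ : ZMod d) :
      a₁ * x - 2⁻¹ * a₁ * (x - y) = a₁ * (2⁻¹ * (x + y)) := by
    linear_combination (-(a₁ * x)) * ZMod.mul_inv_of_unit 2 h2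
  have hzero : 2⁻¹ * (x + y) = 0 ↔ y = -x := by
    rw [(IsUnit.of_mul_eq_one 2 (ZMod.inv_mul_of_unit 2 h2)).mul_right_eq_zero]
    grind
  simp only [Apoint0, Matrix.smul_apply, Matrix.sum_apply, Fintype.sum_prod_type, TW_apply, hsub,
    Finset.sum_ite_eq', Finset.mem_univ, if_true, hchar,
    AddChar.sum_mulShift _ (isPrimitive_stdAddChar d), hzero]
  split_ifs <;> simp [ZMod.card, NeZero.ne d]

lemma TW_mul_Apoint0_apply (u : ZMod d × ZMod d) (x y : ZMod d) :
    (TW d u * Apoint0 d) x y =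
      if y = u.2 - x then stdAddChar (u.1 * x - 2⁻¹ * u.1 * u.2) else 0 := by
  simp only [mul_apply, TW_apply, Apoint0_apply h2, ite_mul, zero_mul, Finset.sum_ite_eq',
    Finset.mem_univ, if_true]
  rw [mul_ite, mul_one, mul_zero, neg_sub]

lemma Apoint_apply (u : ZMod d × ZMod d) (x y : ZMod d) :
    Apoint d u x y = if y = 2 * u.2 - x then stdAddChar (u.1 * (x - y)) else 0 := by
  rw [Apoint, mul_apply]
  simp only [TW_mul_Apoint0_apply h2, ite_mul, zero_mul, Finset.sum_ite_eq', Finset.mem_univ,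
    if_true, conjTranspose_apply, TW_apply, apply_ite star, star_zero, star_stdAddChar, mul_ite,
    mul_zero, ← AddChar.map_add_eq_mul]
  exact if_congr (by grind) (congrArg _ (by ring)) rfl

lemma Apoint_mul_Apoint_apply_self (u v : ZMod d × ZMod d) (x : ZMod d) :
    (Apoint d u * Apoint d v) x x =
      if u.2 = v.2 then stdAddChar ((x - u.2) * (2 * (u.1 - v.1))) else 0 := by
  have hcond : x = 2 * v.2 - (2 * u.2 - x) ↔ u.2 = v.2 := by
    constructor
    · intro h
      exact h2.mul_left_cancel (by linear_combination h)
    · intro h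
      rw [h]
      ring
  simp only [mul_apply, Apoint_apply h2, ite_mul, zero_mul, Finset.sum_ite_eq', Finset.mem_univ,
    if_true]
  rw [mul_ite, mul_zero, ← AddChar.map_add_eq_mul]
  exact if_congr hcond (congrArg _ (by ring)) rfl

end

lemma ZMod.isUnit_two_of_odd {d : ℕ} (hodd : Odd d) : IsUnit (2 : ZMod d) :=
  mod_cast (ZMod.isUnit_iff_coprime 2 d).2 (Nat.coprime_two_left.2 hodd)

theorem phase_point_trace_orthogonal_general (d : ℕ) [NeZero d] (hodd : Odd d)
    (u v : ZMod d × ZMod d) :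
    (Apoint d u * Apoint d v).trace = if u = v then (d : ℂ) else 0 := by
  have h2 := ZMod.isUnit_two_of_odd hodd
  simp only [trace, diag_apply, Apoint_mul_Apoint_apply_self h2]
  by_cases hq : u.2 = v.2
  · simp only [hq, if_true]
    rw [AddChar.sum_sub_mulShift _ _ (isPrimitive_stdAddChar d), ZMod.card]
    exact if_congr (by rw [h2.mul_right_eq_zero, sub_eq_zero, Prod.ext_iff]; tauto) rfl rfl
  · have huv : u ≠ v := fun h => hq (congrArg Prod.snd h)
    simp [hq, huv]

/-- The phase point operators are trace-orthogonal. -/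
theorem phase_point_trace_orthogonal (d : ℕ) [NeZero d] (hodd : Odd d) (hd : 1 < d)
    (u v : ZMod d × ZMod d) :
    (Apoint d u * Apoint d v).trace = if u = v then (d : ℂ) else 0 :=
  phase_point_trace_orthogonal_general d hodd u v
end

section
/- The phase point operators sum to d times the identity: Σ over u ∈ ZMod d × ZMod d of A_u = (d : ℂ) • (1 : Matrix (ZMod d) (ZMod d) ℂ). -/
open Matrix Complex

/-!
Each `T_u` is a monomial matrix: a shift by `u.2` weighted by `x ↦ c_u ω^(u.1 x)` with `|c_u| = 1`.
Hence `(T_u M T_uᴴ) x y = ω^(u.1 (x - y)) M (x - u.2) (y - u.2)`, and summing over `u.1` kills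
the off-diagonal entries by character orthogonality, while summing over `u.2` collects the trace:
`∑ u, T_u M T_uᴴ = d · tr M · 1` for every `M`. Only `T_0` has non-zero trace, so `tr A_0 = 1`.
-/

section WeightedShift

variable {G R : Type*} [AddCommGroup G] [DecidableEq G]

def weightedShift [Zero R] (s : G) (f : G → R) : Matrix G G R :=
  Matrix.of fun x z => if x = z + s then f x else 0

theorem weightedShift_apply [Zero R] (s : G) (f : G → R) (x z : G) :
    weightedShift s f x z = if x = z + s then f x else 0 := rfl

variable [Semiring R]

theorem smul_weightedShift (c : R) (s : G) (f : G → R) :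
    c • weightedShift s f = weightedShift s (c • f) := by
  ext x y
  simp [weightedShift_apply]

variable [Fintype G]

theorem weightedShift_mul_weightedShift (s t : G) (f g : G → R) :
    weightedShift s f * weightedShift t g = weightedShift (s + t) fun x => f x * g (x - s) := by
  ext x y
  simp only [Matrix.mul_apply, weightedShift_apply, ite_mul, zero_mul, mul_ite, mul_zero]
  rw [Finset.sum_eq_single (x - s)] <;> grind

theorem diagonal_mul_weightedShift (s : G) (g f : G → R) :
    Matrix.diagonal g * weightedShift s f = weightedShift s (g * f) := by
  ext x y
  simp [Matrix.diagonal_mul, weightedShift_apply]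

theorem trace_weightedShift (s : G) (f : G → R) :
    (weightedShift s f).trace = if s = 0 then ∑ x, f x else 0 := by
  split_ifs with hs <;> simp [Matrix.trace, weightedShift_apply, hs]

theorem weightedShift_mul_apply (s : G) (f : G → R) (M : Matrix G G R) (x y : G) :
    (weightedShift s f * M) x y = f x * M (x - s) y := by
  simp [Matrix.mul_apply, weightedShift_apply, ← sub_eq_iff_eq_add]

theorem mul_conjTranspose_weightedShift_apply [StarRing R] (s : G) (f : G → R)
    (M : Matrix G G R) (x y : G) :
    (M * (weightedShift s f)ᴴ) x y = M x (y - s) * star (f y) := by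
  simp [Matrix.mul_apply, weightedShift_apply, ← sub_eq_iff_eq_add, apply_ite star]

end WeightedShift

section HeisenbergWeyl

variable (d : ℕ) [NeZero d]

theorem omegaC_isPrimitiveRoot : IsPrimitiveRoot (omegaC d) d :=
  Complex.isPrimitiveRoot_exp d (NeZero.ne d)

noncomputable def omegaChar : AddChar (ZMod d) ℂ :=
  AddChar.zmodChar d (omegaC_isPrimitiveRoot d).pow_eq_one

theorem omegaChar_apply (a : ZMod d) : omegaChar d a = omegaC d ^ a.val :=
  AddChar.zmodChar_apply _ a

theorem sum_omegaChar_mul (t : ZMod d) :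
    ∑ a, omegaChar d (a * t) = if t = 0 then (d : ℂ) else 0 := by
  unfold omegaChar
  rw [AddChar.sum_mulShift t
    (AddChar.zmodChar_primitive_of_primitive_root d (omegaC_isPrimitiveRoot d)), ZMod.card]
  push_cast
  rfl

theorem star_omegaChar (a : ZMod d) : star (omegaChar d a) = omegaChar d (-a) := by
  have hnorm : ‖omegaChar d a‖ = 1 := by
    rw [omegaChar_apply, norm_pow, (omegaC_isPrimitiveRoot d).norm'_eq_one (NeZero.ne d), one_pow]
  rw [AddChar.map_neg_eq_inv, Complex.inv_eq_conj hnorm]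
  rfl

theorem Xmat_pow (m : ℕ) : Xmat d ^ m = weightedShift (m : ZMod d) 1 := by
  induction m with
  | zero => ext x y; simp [weightedShift_apply, Matrix.one_apply]
  | succ m ih =>
    have hX : Xmat d = weightedShift 1 1 := rfl
    rw [pow_succ, ih, hX, weightedShift_mul_weightedShift]
    push_cast
    simp only [Pi.one_apply, mul_one]
    rfl

theorem TW_eq_weightedShift (a : ZMod d × ZMod d) :
    TW d a = weightedShift a.2 fun x =>
      omegaChar d (-((2 : ZMod d)⁻¹ * a.1 * a.2)) * omegaChar d (a.1 * x) := by
  rw [TW, Zmat, Matrix.diagonal_pow, Xmat_pow, diagonal_mul_weightedShift, smul_weightedShift,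
    ZMod.natCast_val, ZMod.cast_id]
  congr 1
  ext x
  simp only [Pi.smul_apply, Pi.pow_apply, mul_one, smul_eq_mul,
    ← omegaChar_apply, ← AddChar.map_nsmul_eq_pow, nsmul_eq_mul, ZMod.natCast_val, ZMod.cast_id',
    id]

theorem TW_mul_mul_conjTranspose_apply (u : ZMod d × ZMod d) (M : Matrix (ZMod d) (ZMod d) ℂ)
    (x y : ZMod d) :
    (TW d u * M * (TW d u)ᴴ) x y = omegaChar d (u.1 * (x - y)) * M (x - u.2) (y - u.2) := by
  rw [TW_eq_weightedShift, mul_conjTranspose_weightedShift_apply, weightedShift_mul_apply,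
    star_mul', star_omegaChar, star_omegaChar]
  have hphase : omegaChar d (-((2 : ZMod d)⁻¹ * u.1 * u.2)) * omegaChar d (u.1 * x) *
      (omegaChar d (- -((2 : ZMod d)⁻¹ * u.1 * u.2)) * omegaChar d (-(u.1 * y)))
        = omegaChar d (u.1 * (x - y)) := by
    simp only [← AddChar.map_add_eq_mul]
    ring_nf
  linear_combination M (x - u.2) (y - u.2) * hphase

theorem sum_TW_mul_mul_conjTranspose (M : Matrix (ZMod d) (ZMod d) ℂ) :
    ∑ u, TW d u * M * (TW d u)ᴴ = ((d : ℂ) * M.trace) • (1 : Matrix (ZMod d) (ZMod d) ℂ) := by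
  ext x y
  simp only [Matrix.sum_apply, TW_mul_mul_conjTranspose_apply, Fintype.sum_prod_type,
    ← Finset.mul_sum, ← Finset.sum_mul, sum_omegaChar_mul, sub_eq_zero]
  rcases eq_or_ne x y with rfl | hxy
  · rw [if_pos rfl, Matrix.smul_apply, Matrix.one_apply_eq, smul_eq_mul, mul_one, Matrix.trace]
    congr 1
    exact Fintype.sum_equiv (Equiv.subLeft x) _ _ fun _ => rfl
  · simp [hxy]

theorem trace_TW (a : ZMod d × ZMod d) : (TW d a).trace = if a = 0 then (d : ℂ) else 0 := by
  rw [TW_eq_weightedShift, trace_weightedShift]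
  rcases eq_or_ne a.2 0 with h2 | h2
  · simp [h2, mul_comm a.1, sum_omegaChar_mul, Prod.ext_iff]
  · simp [h2, Prod.ext_iff]

theorem trace_Apoint0 : (Apoint0 d).trace = 1 := by
  simp [Apoint0, Matrix.trace_sum, trace_TW]

end HeisenbergWeyl

theorem phase_point_sum_identity_general (d : ℕ) [NeZero d] :
    ∑ u : ZMod d × ZMod d, Apoint d u = (d : ℂ) • (1 : Matrix (ZMod d) (ZMod d) ℂ) := by
  simp only [Apoint]
  rw [sum_TW_mul_mul_conjTranspose, trace_Apoint0, mul_one]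

/-- The phase point operators sum to `d` times the identity. -/
theorem phase_point_sum_identity (d : ℕ) [NeZero d] (hodd : Odd d) (hd : 1 < d) :
    ∑ u : ZMod d × ZMod d, Apoint d u = (d : ℂ) • (1 : Matrix (ZMod d) (ZMod d) ℂ) :=
  phase_point_sum_identity_general d
end
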